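/- Let G be a finite simple graph with positive integer vertex weights w. There exists a set S ⊆ V(G) with w(S) + max_{D ∈ cc(G−S)} w(D) = wvi(G) such that for every connected component D of G − S and every module M of G, one of the following holds: M ∩ D = ∅, or M ⊆ D, or D ⊆ M. -/
import Mathlib


open SimpleGraph

variable {V : Type*}

/-- The vertex sets of the connected components of `G − S`
(the subgraph of `G` induced on the complement of `S`). -/
def ccSets (G : SimpleGraph V) (S : Set V) : Set (Set V) :=
  {D | ∃ c : (G.induce Sᶜ).ConnectedComponent, D = Subtype.val '' c.supp}

/-- The total weight of a set of vertices. -/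
noncomputable def wsum (w : V → ℕ) (A : Set V) : ℕ := ∑ᶠ v ∈ A, w v

/-- The weight of a heaviest connected component of `G − S` (`0` if there is none). -/
noncomputable def maxCC (G : SimpleGraph V) (w : V → ℕ) (S : Set V) : ℕ :=
  sSup (wsum w '' ccSets G S)

/-- The weighted vertex integrity of `G`:
`wvi(G) = min_{S ⊆ V(G)} ( w(S) + max_{D ∈ cc(G−S)} w(D) )`. -/
noncomputable def wvi (G : SimpleGraph V) (w : V → ℕ) : ℕ :=
  sInf {k | ∃ S : Set V, k = wsum w S + maxCC G w S}

/-- `M` is a module of `G` if every vertex outside `M` is adjacent either to all of `M` or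
to none of it. -/
def IsModule (G : SimpleGraph V) (M : Set V) : Prop :=
  ∀ x ∉ M, (∀ y ∈ M, G.Adj x y) ∨ (∀ y ∈ M, ¬ G.Adj x y)

section Helpers

variable {G : SimpleGraph V} {S : Set V} {w : V → ℕ}

lemma wsum_empty : wsum w (∅ : Set V) = 0 := finsum_mem_empty

lemma wsum_union [Finite V] {A B : Set V} (h : Disjoint A B) :
    wsum w (A ∪ B) = wsum w A + wsum w B :=
  finsum_mem_union h A.toFinite B.toFinite

lemma wsum_mono [Finite V] {A B : Set V} (h : A ⊆ B) : wsum w A ≤ wsum w B := by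
  have hB : B = A ∪ (B \ A) := (Set.union_diff_cancel h).symm
  rw [hB, wsum_union (Set.disjoint_left.mpr fun a ha hb => hb.2 ha)]
  exact Nat.le_add_right _ _

lemma wsum_diff_add [Finite V] (A X : Set V) :
    wsum w A = wsum w (A \ X) + wsum w (A ∩ X) := by
  rw [← wsum_union (Set.disjoint_left.mpr fun a ha hb => ha.2 hb.2),
    Set.diff_union_inter]

lemma wsum_pos [Finite V] (hw : ∀ v, 0 < w v) {A : Set V} (h : A.Nonempty) :
    0 < wsum w A := by
  obtain ⟨v, hv⟩ := h
  calc 0 < w v := hw v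
    _ = wsum w {v} := finsum_mem_singleton.symm
    _ ≤ wsum w A := wsum_mono (Set.singleton_subset_iff.mpr hv)

lemma mem_image_supp_iff {c : (G.induce Sᶜ).ConnectedComponent} {v : V} :
    v ∈ Subtype.val '' c.supp ↔
      ∃ hv : v ∈ Sᶜ, (G.induce Sᶜ).connectedComponentMk ⟨v, hv⟩ = c := by
  constructor
  · rintro ⟨x, hx, rfl⟩
    exact ⟨x.2, by rwa [ConnectedComponent.mem_supp_iff] at hx⟩
  · rintro ⟨hv, h⟩
    exact ⟨⟨v, hv⟩, (ConnectedComponent.mem_supp_iff _ _).mpr h, rfl⟩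

lemma mem_of_mem_ccSets {D : Set V} (hD : D ∈ ccSets G S) {v : V} (hv : v ∈ D) :
    v ∈ Sᶜ := by
  obtain ⟨c, rfl⟩ := hD
  exact (mem_image_supp_iff.mp hv).1

lemma adj_closure {D : Set V} (hD : D ∈ ccSets G S) {p q : V} (hp : p ∈ D)
    (hq : q ∈ Sᶜ) (h : G.Adj p q) : q ∈ D := by
  obtain ⟨c, rfl⟩ := hD
  obtain ⟨hp', hpc⟩ := mem_image_supp_iff.mp hp
  refine mem_image_supp_iff.mpr ⟨hq, ?_⟩
  rw [← hpc]
  exact ConnectedComponent.sound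
    ((show (G.induce Sᶜ).Adj ⟨q, hq⟩ ⟨p, hp'⟩ from by simpa using h.symm)).reachable

lemma reachable_of_mem_mem {D : Set V} (hD : D ∈ ccSets G S) {p q : V}
    (hp : p ∈ D) (hq : q ∈ D) :
    ∃ (hp' : p ∈ Sᶜ) (hq' : q ∈ Sᶜ), (G.induce Sᶜ).Reachable ⟨p, hp'⟩ ⟨q, hq'⟩ := by
  obtain ⟨c, rfl⟩ := hD
  obtain ⟨hp', h1⟩ := mem_image_supp_iff.mp hp
  obtain ⟨hq', h2⟩ := mem_image_supp_iff.mp hq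
  exact ⟨hp', hq', ConnectedComponent.exact (h1.trans h2.symm)⟩

lemma reach_mem {D : Set V} (hD : D ∈ ccSets G S) {p : V} (hp : p ∈ D)
    (hpc : p ∈ Sᶜ) {q : ↥Sᶜ} (hr : (G.induce Sᶜ).Reachable ⟨p, hpc⟩ q) :
    (q : V) ∈ D := by
  obtain ⟨c, rfl⟩ := hD
  obtain ⟨hp', h1⟩ := mem_image_supp_iff.mp hp
  refine mem_image_supp_iff.mpr ⟨q.2, ?_⟩
  rw [← h1]
  exact ConnectedComponent.sound hr.symm

lemma ccSets_eq_of_mem {D₁ D₂ : Set V} (h1 : D₁ ∈ ccSets G S) (h2 : D₂ ∈ ccSets G S)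
    {u : V} (hu1 : u ∈ D₁) (hu2 : u ∈ D₂) : D₁ = D₂ := by
  obtain ⟨c1, rfl⟩ := h1
  obtain ⟨c2, rfl⟩ := h2
  obtain ⟨h, hc1⟩ := mem_image_supp_iff.mp hu1
  obtain ⟨h', hc2⟩ := mem_image_supp_iff.mp hu2
  rw [← hc1, ← hc2]

lemma compOf_mem_ccSets {u : V} (hu : u ∈ Sᶜ) :
    Subtype.val '' ((G.induce Sᶜ).connectedComponentMk ⟨u, hu⟩).supp ∈ ccSets G S :=
  ⟨_, rfl⟩

lemma mem_compOf {u : V} (hu : u ∈ Sᶜ) :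
    u ∈ Subtype.val '' ((G.induce Sᶜ).connectedComponentMk ⟨u, hu⟩).supp :=
  mem_image_supp_iff.mpr ⟨hu, rfl⟩

lemma ccSets_finite [Finite V] : (ccSets G S).Finite := by
  have : Finite ((G.induce Sᶜ).ConnectedComponent) :=
    Finite.of_surjective (G.induce Sᶜ).connectedComponentMk (fun c => c.exists_rep)
  have heq : ccSets G S =
      Set.range (fun c : (G.induce Sᶜ).ConnectedComponent => Subtype.val '' c.supp) := by
    ext D
    simp only [ccSets, Set.mem_setOf_eq, Set.mem_range, eq_comm]
  rw [heq]
  exact Set.finite_range _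

lemma le_maxCC [Finite V] {D : Set V} (hD : D ∈ ccSets G S) :
    wsum w D ≤ maxCC G w S :=
  le_csSup ((ccSets_finite.image _).bddAbove) ⟨D, hD, rfl⟩

lemma maxCC_le {n : ℕ} (h : ∀ D ∈ ccSets G S, wsum w D ≤ n) : maxCC G w S ≤ n := by
  rcases Set.eq_empty_or_nonempty (ccSets G S) with he | hne
  · simp [maxCC, he]
  · exact csSup_le (hne.image _) (by rintro x ⟨D, hD, rfl⟩; exact h D hD)

lemma walk_closed {α : Type*} {H : SimpleGraph α} {C : Set α}
    (hC : ∀ p ∈ C, ∀ q, H.Adj p q → q ∈ C) :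
    ∀ {u v : α}, H.Walk u v → u ∈ C → v ∈ C := by
  intro u v p
  induction p with
  | nil => exact fun h => h
  | cons h q ih => exact fun hu => ih (hC _ hu _ h)

lemma walk_crossing {α : Type*} {H : SimpleGraph α} {P : α → Prop} :
    ∀ {u v : α}, H.Walk u v → ¬ P u → P v →
      ∃ x y, H.Adj x y ∧ ¬ P x ∧ P y ∧ H.Reachable u x := by
  intro u v p
  induction p with
  | nil => exact fun h1 h2 => absurd h2 h1
  | @cons a b c h q ih =>
    intro h1 h2
    by_cases hb : P b
    · exact ⟨a, b, h, h1, hb, Reachable.refl a⟩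
    · obtain ⟨x, y, hxy, hx, hy, hr⟩ := ih hb h2
      exact ⟨x, y, hxy, hx, hy, (h.reachable).trans hr⟩

/-- Key structural lemma: if `M` is a module, `D` a component of `G − S` containing part of
`M`, `M \ S ⊆ D`, then walking in `G − (S \ M)` from a vertex of an old component `Du`
never leaves `D ∪ (S ∩ M) ∪ Du`. -/
lemma mem_tri {M D Du : Set V} (hMod : IsModule G M)
    (hD : D ∈ ccSets G S) (hDu : Du ∈ ccSets G S)
    (hMS : M \ S ⊆ D) (ha : (M ∩ D).Nonempty)
    {u v : V} (hu : u ∈ Du) (hu' : u ∈ (S \ M)ᶜ) (hv' : v ∈ (S \ M)ᶜ)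
    (hr : (G.induce (S \ M)ᶜ).Reachable ⟨u, hu'⟩ ⟨v, hv'⟩) :
    v ∈ D ∪ (S ∩ M) ∪ Du := by
  obtain ⟨a, haM, haD⟩ := ha
  set C : Set V := D ∪ (S ∩ M) ∪ Du with hC
  have hclosed : ∀ p : ↥(S \ M)ᶜ, (p : V) ∈ C →
      ∀ q : ↥(S \ M)ᶜ, (G.induce (S \ M)ᶜ).Adj p q → (q : V) ∈ C := by
    intro p hp q hadj
    have hpq : G.Adj ↑p ↑q := by simpa using hadj
    have hq' : (q : V) ∉ S \ M := q.2
    by_cases hqS : (q : V) ∈ S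
    · exact Or.inl (Or.inr ⟨hqS, by by_contra hqM; exact hq' ⟨hqS, hqM⟩⟩)
    · have hqSc : (q : V) ∈ Sᶜ := hqS
      rcases hp with (hpD | hpSM) | hpDu
      · exact Or.inl (Or.inl (adj_closure hD hpD hqSc hpq))
      · by_cases hqM : (q : V) ∈ M
        · exact Or.inl (Or.inl (hMS ⟨hqM, hqS⟩))
        · rcases hMod _ hqM with hall | hnone
          · exact Or.inl (Or.inl (adj_closure hD haD hqSc (hall a haM).symm))
          · exact absurd hpq.symm (hnone _ hpSM.2)
      · exact Or.inr (adj_closure hDu hpDu hqSc hpq)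
  obtain ⟨p⟩ := hr
  have := walk_closed (C := {z : ↥(S \ M)ᶜ | (z : V) ∈ C})
    (fun p hp q hadj => hclosed p hp q hadj) p (Or.inr hu)
  exact this

end Helpers

/-- There is an optimal separator `S` for weighted vertex integrity such that every
connected component `D` of `G − S` and every module `M` of `G` satisfy `M ∩ D = ∅`,
`M ⊆ D`, or `D ⊆ M`. -/
theorem exists_optimal_separator_module_compatible [Fintype V] (G : SimpleGraph V)
    (w : V → ℕ) (hw : ∀ v, 0 < w v) :
    ∃ S : Set V, wsum w S + maxCC G w S = wvi G w ∧
      ∀ D ∈ ccSets G S, ∀ M : Set V, IsModule G M →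
        M ∩ D = ∅ ∨ M ⊆ D ∨ D ⊆ M := by
  classical
  have hne : {k | ∃ S : Set V, k = wsum w S + maxCC G w S}.Nonempty := ⟨_, ∅, rfl⟩
  set T : Set ℕ := {n | ∃ S : Set V, (wsum w S + maxCC G w S = wvi G w) ∧ wsum w S = n}
    with hTdef
  have hTne : T.Nonempty := by
    obtain ⟨S₀, hS₀⟩ := Nat.sInf_mem hne
    exact ⟨wsum w S₀, S₀, hS₀.symm, rfl⟩
  obtain ⟨S, hSopt, hSval⟩ := Nat.sInf_mem hTne
  refine ⟨S, hSopt, ?_⟩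
  intro D hD M hMod
  by_contra hbad
  push_neg at hbad
  obtain ⟨hMD, hMnD, hDnM⟩ := hbad
  have haMD : (M ∩ D).Nonempty := hMD
  obtain ⟨a, haM, haD⟩ := haMD
  have haMD : (M ∩ D).Nonempty := ⟨a, haM, haD⟩
  obtain ⟨b, hbM, hbD⟩ := Set.not_subset.mp hMnD
  obtain ⟨c, hcD, hcM⟩ := Set.not_subset.mp hDnM
  -- find a vertex of `D` outside `M` adjacent to something in `M`
  obtain ⟨hc', ha', hreach⟩ := reachable_of_mem_mem hD hcD haD
  obtain ⟨pw⟩ := hreach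
  obtain ⟨x, y, hxy, hx, hy, hrx⟩ :=
    walk_crossing (P := fun z : ↥Sᶜ => (z : V) ∈ M) pw hcM haM
  have hxD : (x : V) ∈ D := reach_mem hD hcD hc' hrx
  have hxall : ∀ z ∈ M, G.Adj ↑x z := by
    rcases hMod _ hx with h | h
    · exact h
    · exact absurd (show G.Adj ↑x ↑y by simpa using hxy) (h _ hy)
  have hbS : b ∈ S := by
    by_contra hbS
    exact hbD (adj_closure hD hxD hbS (hxall b hbM))
  have hMS : M \ S ⊆ D := by
    rintro m ⟨hmM, hmS⟩
    exact adj_closure hD hxD hmS (hxall m hmM)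
  have hSMne : (S ∩ M).Nonempty := ⟨b, hbS, hbM⟩
  -- every component of `G − (S \ M)` is bounded
  have hbound : ∀ E ∈ ccSets G (S \ M), wsum w E ≤ maxCC G w S + wsum w (S ∩ M) := by
    intro E hE
    have hEsplit : wsum w E = wsum w (E \ (S ∩ M)) + wsum w (E ∩ (S ∩ M)) :=
      wsum_diff_add E (S ∩ M)
    have hEcaple : wsum w (E ∩ (S ∩ M)) ≤ wsum w (S ∩ M) :=
      wsum_mono Set.inter_subset_right
    rcases Set.eq_empty_or_nonempty (E \ (S ∩ M)) with hE0 | hEne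
    · rw [hEsplit, hE0, wsum_empty]
      omega
    · -- the part of `E` outside `S ∩ M` lies in a single old component
      have hkey : ∃ D' ∈ ccSets G S, E \ (S ∩ M) ⊆ D' := by
        rcases Set.eq_empty_or_nonempty ((E \ (S ∩ M)) ∩ D) with hint | ⟨u, ⟨huE, huSM⟩, huD⟩
        · obtain ⟨u, huE, huSM⟩ := hEne
          have huS : u ∈ Sᶜ := by
            intro huS
            have h1 : u ∉ S \ M := mem_of_mem_ccSets hE huE
            exact huSM ⟨huS, by by_contra hm; exact h1 ⟨huS, hm⟩⟩
          refine ⟨_, compOf_mem_ccSets (G := G) huS, ?_⟩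
          rintro v ⟨hvE, hvSM⟩
          obtain ⟨hu', hv', hr⟩ := reachable_of_mem_mem hE huE hvE
          have := mem_tri hMod hD (compOf_mem_ccSets (G := G) huS) hMS
            haMD (mem_compOf huS) hu' hv' hr
          rcases this with (hvD | hvSM') | hvDu
          · exact absurd (Set.mem_inter (Set.mem_diff_of_mem hvE hvSM) hvD) (by rw [hint]; exact id)
          · exact absurd hvSM' hvSM
          · exact hvDu
        · refine ⟨D, hD, ?_⟩
          rintro v ⟨hvE, hvSM⟩
          obtain ⟨hu', hv', hr⟩ := reachable_of_mem_mem hE huE hvE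
          have := mem_tri hMod hD hD hMS haMD huD hu' hv' hr
          rcases this with (hvD | hvSM') | hvD
          · exact hvD
          · exact absurd hvSM' hvSM
          · exact hvD
      obtain ⟨D', hD', hsub⟩ := hkey
      have h1 : wsum w (E \ (S ∩ M)) ≤ maxCC G w S :=
        le_trans (wsum_mono hsub) (le_maxCC hD')
      omega
  have h2 : wsum w S = wsum w (S \ M) + wsum w (S ∩ M) := wsum_diff_add S M
  have hS'cost : wsum w (S \ M) + maxCC G w (S \ M) ≤ wsum w S + maxCC G w S := by
    have h1 : maxCC G w (S \ M) ≤ maxCC G w S + wsum w (S ∩ M) := maxCC_le hbound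
    omega
  have hopt' : wsum w (S \ M) + maxCC G w (S \ M) = wvi G w := by
    have hle : wvi G w ≤ wsum w (S \ M) + maxCC G w (S \ M) := Nat.sInf_le ⟨S \ M, rfl⟩
    omega
  have hpos : 0 < wsum w (S ∩ M) := wsum_pos hw hSMne
  have hmin : sInf T ≤ wsum w (S \ M) := Nat.sInf_le ⟨S \ M, hopt', rfl⟩
  omega
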